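/- Let G* be a finite simple bipartite graph with bipartition (A, D*), let M_c be a minimal matching D*-cover of G* with centers in A, let P_uv be an M_c-switching path, and let M_c' = M_c Δ E(P_uv) be the transformation of M_c with respect to P_uv. If M_c has at least two maximum centers, then Δ(G*[M_c']+A) = Δ(G*[M_c]+A) and M_c' has strictly fewer maximum centers than M_c; if u is the only maximum center of M_c, then Δ(G*[M_c']+A) < Δ(G*[M_c]+A). -/

import Mathlib

variable {V : Type*}

/-- The set of vertices covered by a set of edges. -/
def edgeCover (M : Finset (Sym2 V)) : Set V := {v | ∃ e ∈ M, v ∈ e}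

/-- `M` is a matching of `G`: a set of pairwise disjoint edges of `G`. -/
def IsMatchingSet (G : SimpleGraph V) (M : Finset (Sym2 V)) : Prop :=
  (∀ e ∈ M, e ∈ G.edgeSet) ∧
    ∀ e ∈ M, ∀ f ∈ M, e ≠ f → ∀ v : V, v ∈ e → v ∉ f

/-- `M` is a maximum matching of `G`. -/
def IsMaximumMatchingSet (G : SimpleGraph V) (M : Finset (Sym2 V)) : Prop :=
  IsMatchingSet G M ∧ ∀ N : Finset (Sym2 V), IsMatchingSet G N → N.card ≤ M.card

variable [Fintype V] [DecidableEq V]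

/-- `M` is a `k`-matching cover of `G`: a union of `k` matchings of `G` covering `V(G)`. -/
def IsKMatchingCover (G : SimpleGraph V) (k : ℕ) (M : Finset (Sym2 V)) : Prop :=
  (∃ f : Fin k → Finset (Sym2 V), (∀ i, IsMatchingSet G (f i)) ∧
      M = Finset.univ.biUnion f) ∧
    ∀ v : V, v ∈ edgeCover M

/-- The matching cover number `mc(G)`. -/
noncomputable def mc (G : SimpleGraph V) : ℕ :=
  sInf {k | ∃ M : Finset (Sym2 V), IsKMatchingCover G k M}

/-- `M` is a `k`-matching `D`-cover of `G`: a union of `k` matchings of `G` covering `D`. -/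
def IsKMatchingDCover (G : SimpleGraph V) (D : Set V) (k : ℕ)
    (M : Finset (Sym2 V)) : Prop :=
  (∃ f : Fin k → Finset (Sym2 V), (∀ i, IsMatchingSet G (f i)) ∧
      M = Finset.univ.biUnion f) ∧
    ∀ v ∈ D, v ∈ edgeCover M

/-- The matching `D`-cover number `md(G)`. -/
noncomputable def md (G : SimpleGraph V) (D : Set V) : ℕ :=
  sInf {k | ∃ M : Finset (Sym2 V), IsKMatchingDCover G D k M}

/-- The Gallai–Edmonds set `D(G)`: vertices missed by some maximum matching. -/
def Dset (G : SimpleGraph V) : Set V :=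
  {v | ∃ M : Finset (Sym2 V), IsMaximumMatchingSet G M ∧ v ∉ edgeCover M}

/-- The Gallai–Edmonds set `A(G) = N_G(D(G))`. -/
def Aset (G : SimpleGraph V) : Set V :=
  {v | v ∉ Dset G ∧ ∃ u ∈ Dset G, G.Adj u v}

/-- The Gallai–Edmonds set `C(G) = V(G) \ (A(G) ∪ D(G))`. -/
def Cset (G : SimpleGraph V) : Set V :=
  {v | v ∉ Dset G ∧ v ∉ Aset G}

/-- The induced subgraph `G[s]`, viewed as a graph on the same vertex type. -/
def indOn (G : SimpleGraph V) (s : Set V) : SimpleGraph V where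
  Adj a b := a ∈ s ∧ b ∈ s ∧ G.Adj a b
  symm := ⟨by rintro a b ⟨ha, hb, h⟩; exact ⟨hb, ha, h.symm⟩⟩
  loopless := ⟨by rintro a ⟨-, -, h⟩; exact G.loopless.irrefl a h⟩

/-- `D*`: the set of isolated vertices of `G[D(G)]`. -/
def DstarSet (G : SimpleGraph V) : Set V :=
  {v | v ∈ Dset G ∧ ∀ u : V, ¬ (indOn G (Dset G)).Adj v u}

/-- The bipartite graph `G*`, obtained from `G` by deleting the nontrivial components of
`G[D(G)]`, the vertices of `C(G)`, and the edges spanned by `A(G)`: its edges are exactly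
the edges of `G` joining `A(G)` and `D*`. -/
def Gstar (G : SimpleGraph V) : SimpleGraph V where
  Adj a b := G.Adj a b ∧
    ((a ∈ Aset G ∧ b ∈ DstarSet G) ∨ (a ∈ DstarSet G ∧ b ∈ Aset G))
  symm := ⟨by rintro a b ⟨h, hc⟩; exact ⟨h.symm, by tauto⟩⟩
  loopless := ⟨by rintro a ⟨h, -⟩; exact G.loopless.irrefl a h⟩

open Classical in
/-- The degree of `v` in the edge set `M`; this is the degree of `v` in `G[M]+A`
(vertices not covered by `M` have degree `0`). -/
noncomputable def degM (M : Finset (Sym2 V)) (v : V) : ℕ :=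
  (M.filter fun e => v ∈ e).card

/-- The maximum degree `Δ(G[M]+A)`. -/
noncomputable def maxDegPlus (M : Finset (Sym2 V)) : ℕ :=
  Finset.univ.sup fun v : V => degM M v

/-- `w` is a maximum center of `M` (all vertices of `A` being regarded as centers). -/
def IsMaximumCenter (A : Set V) (M : Finset (Sym2 V)) (w : V) : Prop :=
  w ∈ A ∧ degM M w = maxDegPlus M

/-- `(A, D)` is a bipartition of `G`. -/
def IsBipartition (G : SimpleGraph V) (A D : Set V) : Prop :=
  Disjoint A D ∧ A ∪ D = Set.univ ∧
    ∀ a b : V, G.Adj a b → (a ∈ A ∧ b ∈ D) ∨ (a ∈ D ∧ b ∈ A)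

/-- A matching `D`-cover of `G`, recorded as an edge set
(a union of matchings of `G` covering `D`). -/
def IsMDCoverSet (G : SimpleGraph V) (D : Set V) (M : Finset (Sym2 V)) : Prop :=
  ∃ k, IsKMatchingDCover G D k M

/-- A minimal matching `D`-cover: no proper subset is a matching `D`-cover. -/
def IsMinimalMDCover (G : SimpleGraph V) (D : Set V) (M : Finset (Sym2 V)) : Prop :=
  IsMDCoverSet G D M ∧ ∀ M' ⊂ M, ¬ IsMDCoverSet G D M'

/-- The graph `G[M]` spanned by an edge set, on the same vertex type. -/
def fromEdges (M : Finset (Sym2 V)) : SimpleGraph V where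
  Adj a b := a ≠ b ∧ s(a, b) ∈ M
  symm := ⟨by rintro a b ⟨hne, h⟩; exact ⟨hne.symm, by rwa [Sym2.eq_swap]⟩⟩
  loopless := ⟨by rintro a ⟨hne, -⟩; exact hne rfl⟩

/-- The connected component of `v` in `G[M]` is a star with center `c`:
every vertex of the component is `c` or a neighbour of `c`, and every edge of the
component is incident with `c`. -/
def StarCenteredAt (M : Finset (Sym2 V)) (c v : V) : Prop :=
  (fromEdges M).Reachable c v ∧
    (∀ u : V, (fromEdges M).Reachable u v → u = c ∨ (fromEdges M).Adj c u) ∧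
    ∀ e ∈ M, (∃ x, x ∈ e ∧ (fromEdges M).Reachable x v) → c ∈ e

/-- Every component of `G[M]` is a star whose center lies in `A`. -/
def CentersInA (A : Set V) (M : Finset (Sym2 V)) : Prop :=
  ∀ v ∈ edgeCover M, ∃ c ∈ A, StarCenteredAt M c v

/-- `w` is an `M`-switching path: an `M`-alternating path (starting at a maximum center
with an edge of `M`, vertices alternately centers in `A` and ends, edges alternately in
`M` and outside `M`) ending at a center `v` with `d(u) ≥ d(v) + 2`. -/
def IsSwitchingPath (G : SimpleGraph V) (A : Set V) (M : Finset (Sym2 V))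
    (n : ℕ) (w : Fin (n + 1) → V) : Prop :=
  0 < n ∧ Function.Injective w ∧
    (∀ i : Fin n, G.Adj (w i.castSucc) (w i.succ)) ∧
    (∀ i : Fin n, (s(w i.castSucc, w i.succ) ∈ M ↔ Even (i : ℕ))) ∧
    (∀ i : Fin (n + 1), w i ∈ A ↔ Even (i : ℕ)) ∧
    w (Fin.last n) ∈ A ∧
    IsMaximumCenter A M (w 0) ∧
    degM M (w (Fin.last n)) + 2 ≤ degM M (w 0)

/-- There is an `M`-switching path from `u` to `v` in `G`. -/
def ExistsSwitchingPath (G : SimpleGraph V) (A : Set V) (M : Finset (Sym2 V))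
    (u v : V) : Prop :=
  ∃ (n : ℕ) (w : Fin (n + 1) → V),
    IsSwitchingPath G A M n w ∧ w 0 = u ∧ w (Fin.last n) = v

/-- The edge set of the path `w 0, w 1, …, w n`. -/
def pathEdges (n : ℕ) (w : Fin (n + 1) → V) : Finset (Sym2 V) :=
  Finset.univ.image fun i : Fin n => s(w i.castSucc, w i.succ)

section Aux

set_option linter.unusedSectionVars false

private lemma degM_def' (M : Finset (Sym2 V)) (v : V) :
    degM M v = (M.filter fun e => v ∈ e).card := by
  rw [degM]

private lemma degM_union (M N : Finset (Sym2 V)) (h : Disjoint M N) (v : V) :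
    degM (M ∪ N) v = degM M v + degM N v := by
  simp only [degM_def']
  rw [Finset.filter_union, Finset.card_union_of_disjoint (Finset.disjoint_filter_filter h)]

private lemma degM_le_max (M : Finset (Sym2 V)) (v : V) : degM M v ≤ maxDegPlus M :=
  Finset.le_sup (Finset.mem_univ v)

private lemma degM_le_one (A : Set V) (Mc : Finset (Sym2 V)) (hcen : CentersInA A Mc)
    (v : V) (hv : v ∉ A) : degM Mc v ≤ 1 := by
  rw [degM_def']
  by_cases h : ∃ e ∈ Mc, v ∈ e
  · obtain ⟨c, hcA, hstar⟩ := hcen v h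
    have hvc : v ≠ c := fun h' => hv (h' ▸ hcA)
    refine Finset.card_le_one.mpr ?_
    intro e he f hf
    rw [Finset.mem_filter] at he hf
    have hce : c ∈ e := hstar.2.2 e he.1 ⟨v, he.2, SimpleGraph.Reachable.refl v⟩
    have hcf : c ∈ f := hstar.2.2 f hf.1 ⟨v, hf.2, SimpleGraph.Reachable.refl v⟩
    rw [(Sym2.mem_and_mem_iff hvc).mp ⟨he.2, hce⟩, (Sym2.mem_and_mem_iff hvc).mp ⟨hf.2, hcf⟩]
  · push_neg at h
    have : (Mc.filter fun e => v ∈ e) = ∅ :=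
      Finset.filter_eq_empty_iff.mpr fun e he => h e he
    rw [this]
    simp

private lemma degM_switch (Mc : Finset (Sym2 V)) (n : ℕ) (w : Fin (n + 1) → V)
    (hinj : Function.Injective w) (hn : 0 < n) (hev : Even n)
    (hmem : ∀ i : Fin n, s(w i.castSucc, w i.succ) ∈ Mc ↔ Even (i : ℕ)) :
    (∀ v : V, v ≠ w 0 → v ≠ w (Fin.last n) →
      degM ((Mc \ pathEdges n w) ∪ (pathEdges n w \ Mc)) v = degM Mc v) ∧
    degM ((Mc \ pathEdges n w) ∪ (pathEdges n w \ Mc)) (w 0) + 1 = degM Mc (w 0) ∧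
    degM ((Mc \ pathEdges n w) ∪ (pathEdges n w \ Mc)) (w (Fin.last n)) =
      degM Mc (w (Fin.last n)) + 1 := by
  set f : Fin n → Sym2 V := fun j => s(w j.castSucc, w j.succ) with hf
  have hfinj : Function.Injective f := by
    intro j k hjk
    rw [hf] at hjk
    simp only [Sym2.eq_iff] at hjk
    rcases hjk with ⟨h1, _⟩ | ⟨h1, h2⟩
    · exact Fin.castSucc_injective n (hinj h1)
    · have e1 : (j : ℕ) = (k : ℕ) + 1 := congrArg Fin.val (hinj h1)
      have e2 : (j : ℕ) + 1 = (k : ℕ) := congrArg Fin.val (hinj h2)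
      omega
  have hP : pathEdges n w = Finset.univ.image f := rfl
  have hdegim : ∀ (S : Finset (Fin n)) (v : V),
      degM (S.image f) v = (S.filter fun j => v ∈ f j).card := by
    intro S v
    rw [degM_def', Finset.filter_image]
    exact Finset.card_image_of_injective _ hfinj
  have hinter : Mc ∩ pathEdges n w =
      (Finset.univ.filter fun j : Fin n => Even (j : ℕ)).image f := by
    ext e
    simp only [Finset.mem_inter, hP, Finset.mem_image, Finset.mem_univ, true_and,
      Finset.mem_filter]
    constructor
    · rintro ⟨heM, j, rfl⟩
      exact ⟨j, (hmem j).mp heM, rfl⟩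
    · rintro ⟨j, hj, rfl⟩
      exact ⟨(hmem j).mpr hj, j, rfl⟩
  have hsdiff : pathEdges n w \ Mc =
      (Finset.univ.filter fun j : Fin n => ¬ Even (j : ℕ)).image f := by
    ext e
    simp only [Finset.mem_sdiff, hP, Finset.mem_image, Finset.mem_univ, true_and,
      Finset.mem_filter]
    constructor
    · rintro ⟨⟨j, rfl⟩, heM⟩
      exact ⟨j, fun h => heM ((hmem j).mpr h), rfl⟩
    · rintro ⟨j, hj, rfl⟩
      exact ⟨⟨j, rfl⟩, fun h => hj ((hmem j).mp h)⟩
  have hsplit : ∀ v, degM Mc v =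
      degM (Mc \ pathEdges n w) v +
        ((Finset.univ.filter fun j : Fin n => Even (j : ℕ)).filter fun j => v ∈ f j).card := by
    intro v
    conv_lhs => rw [← Finset.sdiff_union_inter Mc (pathEdges n w)]
    rw [degM_union _ _ (Finset.sdiff_disjoint.mono_right Finset.inter_subset_right),
      hinter, hdegim]
  have hsplit' : ∀ v, degM ((Mc \ pathEdges n w) ∪ (pathEdges n w \ Mc)) v =
      degM (Mc \ pathEdges n w) v +
        ((Finset.univ.filter fun j : Fin n => ¬ Even (j : ℕ)).filter fun j => v ∈ f j).card := by
    intro v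
    rw [degM_union _ _ (Finset.sdiff_disjoint.mono_right Finset.sdiff_subset),
      hsdiff, hdegim]
  have hcond : ∀ (i : Fin (n + 1)) (j : Fin n),
      w i ∈ f j ↔ ((j : ℕ) = (i : ℕ) ∨ (j : ℕ) + 1 = (i : ℕ)) := by
    intro i j
    rw [hf]
    simp only [Sym2.mem_iff]
    constructor
    · rintro (h | h)
      · left
        have := congrArg Fin.val (hinj h)
        simpa using this.symm
      · right
        have := congrArg Fin.val (hinj h)
        simpa using this.symm
    · rintro (h | h)
      · left
        exact congrArg w (Fin.ext (by simpa using h.symm))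
      · right
        exact congrArg w (Fin.ext (by simpa using h.symm))
  have keyEv : ∀ (i : Fin (n + 1)) (m : ℕ) (hm : m < n),
      (∀ j : ℕ, j < n → (j % 2 = 0 ∧ (j = (i : ℕ) ∨ j + 1 = (i : ℕ)) ↔ j = m)) →
      ((Finset.univ.filter fun j : Fin n => Even (j : ℕ)).filter fun j => w i ∈ f j)
        = {⟨m, hm⟩} := by
    intro i m hm hiff
    ext j
    simp only [Finset.mem_filter, Finset.mem_univ, true_and, hcond, Finset.mem_singleton,
      Fin.ext_iff, Nat.even_iff]
    exact hiff j j.isLt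
  have keyOd : ∀ (i : Fin (n + 1)) (m : ℕ) (hm : m < n),
      (∀ j : ℕ, j < n → (¬ j % 2 = 0 ∧ (j = (i : ℕ) ∨ j + 1 = (i : ℕ)) ↔ j = m)) →
      ((Finset.univ.filter fun j : Fin n => ¬ Even (j : ℕ)).filter fun j => w i ∈ f j)
        = {⟨m, hm⟩} := by
    intro i m hm hiff
    ext j
    simp only [Finset.mem_filter, Finset.mem_univ, true_and, hcond, Finset.mem_singleton,
      Fin.ext_iff, Nat.even_iff]
    exact hiff j j.isLt
  have keyEvE : ∀ (i : Fin (n + 1)),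
      (∀ j : ℕ, j < n → ¬ (j % 2 = 0 ∧ (j = (i : ℕ) ∨ j + 1 = (i : ℕ)))) →
      ((Finset.univ.filter fun j : Fin n => Even (j : ℕ)).filter fun j => w i ∈ f j) = ∅ := by
    intro i hiff
    refine Finset.filter_eq_empty_iff.mpr ?_
    intro j hj hmemj
    rw [hcond] at hmemj
    exact hiff j j.isLt ⟨Nat.even_iff.mp (Finset.mem_filter.mp hj).2, hmemj⟩
  have keyOdE : ∀ (i : Fin (n + 1)),
      (∀ j : ℕ, j < n → ¬ (¬ j % 2 = 0 ∧ (j = (i : ℕ) ∨ j + 1 = (i : ℕ)))) →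
      ((Finset.univ.filter fun j : Fin n => ¬ Even (j : ℕ)).filter fun j => w i ∈ f j) = ∅ := by
    intro i hiff
    refine Finset.filter_eq_empty_iff.mpr ?_
    intro j hj hmemj
    rw [hcond] at hmemj
    exact hiff j j.isLt ⟨fun h => (Finset.mem_filter.mp hj).2 (Nat.even_iff.mpr h), hmemj⟩
  have hnev : n % 2 = 0 := Nat.even_iff.mp hev
  refine ⟨?_, ?_, ?_⟩
  · -- interior / off-path vertices
    intro v hv0 hvn
    by_cases hv : ∃ i, v = w i
    · obtain ⟨i, rfl⟩ := hv
      have hi0 : (i : ℕ) ≠ 0 := by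
        intro h
        exact hv0 (congrArg w (Fin.ext (by simpa using h)))
      have hin : (i : ℕ) ≠ n := by
        intro h
        exact hvn (congrArg w (Fin.ext (by simpa [Fin.val_last] using h)))
      have hilt : (i : ℕ) < n + 1 := i.isLt
      rw [hsplit', hsplit (w i)]
      rcases Nat.even_or_odd ((i : ℕ)) with hpar | hpar
      · have h2 : (i : ℕ) % 2 = 0 := Nat.even_iff.mp hpar
        rw [keyEv i (i : ℕ) (by omega) (by intro j hj; omega),
          keyOd i ((i : ℕ) - 1) (by omega) (by intro j hj; omega)]
        simp
      · have h2 : (i : ℕ) % 2 = 1 := Nat.odd_iff.mp hpar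
        rw [keyEv i ((i : ℕ) - 1) (by omega) (by intro j hj; omega),
          keyOd i (i : ℕ) (by omega) (by intro j hj; omega)]
        simp
    · push_neg at hv
      have hoff : ∀ (S : Finset (Fin n)), S.filter (fun j => v ∈ f j) = ∅ := by
        intro S
        refine Finset.filter_eq_empty_iff.mpr ?_
        intro j _ hj
        rw [hf] at hj
        rcases Sym2.mem_iff.mp hj with h | h
        · exact hv _ h
        · exact hv _ h
      rw [hsplit', hsplit v, hoff, hoff]
  · -- v = w 0
    rw [hsplit', hsplit (w 0)]
    rw [keyEv 0 0 hn (by intro j hj; simp only [Fin.val_zero]; omega),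
      keyOdE 0 (by intro j hj; simp only [Fin.val_zero]; omega)]
    simp
  · -- v = w (last n)
    rw [hsplit', hsplit (w (Fin.last n))]
    rw [keyOd (Fin.last n) (n - 1) (by omega) (by intro j hj; simp only [Fin.val_last]; omega),
      keyEvE (Fin.last n) (by intro j hj; simp only [Fin.val_last]; omega)]
    simp

end Aux

/-- for the transformation `M_c' = M_c Δ E(P_uv)`: if `M_c` has at least two
maximum centers then `Δ(G*[M_c']+A) = Δ(G*[M_c]+A)` and `M_c'` has strictly fewer maximum
centers; if `u` is the only maximum center then `Δ(G*[M_c']+A) < Δ(G*[M_c]+A)`. -/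
theorem transformation_maximum_centers (Gb : SimpleGraph V) (A D : Set V)
    (hbip : IsBipartition Gb A D)
    (Mc : Finset (Sym2 V)) (hmin : IsMinimalMDCover Gb D Mc) (hcen : CentersInA A Mc)
    (n : ℕ) (w : Fin (n + 1) → V) (hsw : IsSwitchingPath Gb A Mc n w) :
    (2 ≤ {x : V | IsMaximumCenter A Mc x}.ncard →
      maxDegPlus ((Mc \ pathEdges n w) ∪ (pathEdges n w \ Mc)) = maxDegPlus Mc ∧
      {x : V | IsMaximumCenter A ((Mc \ pathEdges n w) ∪ (pathEdges n w \ Mc)) x}.ncard <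
        {x : V | IsMaximumCenter A Mc x}.ncard) ∧
    ({x : V | IsMaximumCenter A Mc x} = {w 0} →
      maxDegPlus ((Mc \ pathEdges n w) ∪ (pathEdges n w \ Mc)) < maxDegPlus Mc) := by
  obtain ⟨hn, hinj, hadj, hmem, hA, hlastA, hmaxc, hdeg⟩ := hsw
  have hev : Even n := by
    have := (hA (Fin.last n)).mp hlastA
    simpa [Fin.val_last] using this
  set M' := (Mc \ pathEdges n w) ∪ (pathEdges n w \ Mc) with hM'
  set Δ := maxDegPlus Mc with hΔdef
  obtain ⟨hds, hd1, hd2⟩ := degM_switch Mc n w hinj hn hev hmem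
  rw [← hM'] at hds hd1 hd2
  have hw0 : degM Mc (w 0) = Δ := hmaxc.2
  have hw0A : w 0 ∈ A := hmaxc.1
  have hΔ2 : 2 ≤ Δ := by omega
  have hub : ∀ v, degM M' v ≤ Δ := by
    intro v
    by_cases h0 : v = w 0
    · subst h0; omega
    by_cases hl : v = w (Fin.last n)
    · subst hl; omega
    · rw [hds v h0 hl]; exact degM_le_max Mc v
  constructor
  · intro h2
    have hfin : {x : V | IsMaximumCenter A Mc x}.Finite := Set.toFinite _
    obtain ⟨a, b, ha, hb, hab⟩ := (Set.one_lt_ncard_iff hfin).mp (by omega)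
    have hx : ∃ x, IsMaximumCenter A Mc x ∧ x ≠ w 0 := by
      by_cases h : a = w 0
      · exact ⟨b, hb, fun hh => hab (h.trans hh.symm)⟩
      · exact ⟨a, ha, h⟩
    obtain ⟨x, hxmax, hxne⟩ := hx
    have hxΔ : degM Mc x = Δ := hxmax.2
    have hxnl : x ≠ w (Fin.last n) := by
      intro h; rw [h] at hxΔ; omega
    have hxM' : degM M' x = Δ := by rw [hds x hxne hxnl]; exact hxΔ
    have hmax' : maxDegPlus M' = Δ :=
      le_antisymm (Finset.sup_le fun v _ => hub v) (hxM' ▸ degM_le_max M' x)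
    refine ⟨hmax', ?_⟩
    have hseteq : {x : V | IsMaximumCenter A M' x}
        = {x : V | IsMaximumCenter A Mc x} \ {w 0} := by
      ext v
      simp only [Set.mem_setOf_eq, Set.mem_diff, Set.mem_singleton_iff, IsMaximumCenter,
        hmax']
      constructor
      · rintro ⟨hvA, hvd⟩
        by_cases h0 : v = w 0
        · exfalso; rw [h0] at hvd; omega
        by_cases hl : v = w (Fin.last n)
        · exfalso; rw [hl, hd2] at hvd; omega
        · rw [hds v h0 hl] at hvd
          exact ⟨⟨hvA, hvd⟩, h0⟩
      · rintro ⟨⟨hvA, hvd⟩, h0⟩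
        have hl : v ≠ w (Fin.last n) := by
          intro h; rw [h] at hvd; omega
        rw [← hds v h0 hl] at hvd
        exact ⟨hvA, hvd⟩
    rw [hseteq]
    exact Set.ncard_lt_ncard (Set.sdiff_singleton_ssubset.mpr ⟨hw0A, hw0⟩) hfin
  · intro huniq
    have hltA : ∀ v, v ∈ A → v ≠ w 0 → degM Mc v < Δ := by
      intro v hvA hv0
      rcases lt_or_eq_of_le (degM_le_max Mc v) with h | h
      · exact h
      · exfalso
        have hv : v ∈ {x : V | IsMaximumCenter A Mc x} := ⟨hvA, h⟩
        rw [huniq] at hv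
        exact hv0 hv
    have : Finset.univ.sup (fun v : V => degM M' v) < Δ := by
      refine (Finset.sup_lt_iff (show (⊥ : ℕ) < Δ by
        simp only [bot_eq_zero]; omega)).mpr ?_
      intro v _
      by_cases h0 : v = w 0
      · subst h0; omega
      by_cases hl : v = w (Fin.last n)
      · subst hl; omega
      · rw [hds v h0 hl]
        by_cases hvA : v ∈ A
        · exact hltA v hvA h0
        · have := degM_le_one A Mc hcen v hvA
          omega
    exact this
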